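/- Let g₀, ε, φ, ρ, h be as in the graph-surface setup with ρ ≠ 0, and suppose φ satisfies the minimality condition h^{αβ} φ_{,αβ} = 0. Then ∂_α[√ρ h^{αβ} ∂_β φ] = 0 (i.e. √ρ h^{αβ} φ_{,β} is divergence free), at points where ρ > 0. -/

import Mathlib

open Matrix Real

/-- First partial derivative in direction `i`. -/
noncomputable def pd (i : Fin 2) (f : (Fin 2 → ℝ) → ℝ) (p : Fin 2 → ℝ) : ℝ :=
  fderiv ℝ f p (Pi.single i 1)

/-- Second partial derivative. -/
noncomputable def pd2 (i j : Fin 2) (f : (Fin 2 → ℝ) → ℝ) (p : Fin 2 → ℝ) : ℝ :=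
  pd i (fun q => pd j f q) p

/-- Third partial derivative. -/
noncomputable def pd3 (i j k : Fin 2) (f : (Fin 2 → ℝ) → ℝ) (p : Fin 2 → ℝ) : ℝ :=
  pd i (fun q => pd2 j k f q) p

/-- `φ^μ = g₀^{μα} φ_{,α}` (index raised with the inverse of `g₀`). -/
noncomputable def phiUp (g₀ : Matrix (Fin 2) (Fin 2) ℝ) (φ : (Fin 2 → ℝ) → ℝ)
    (p : Fin 2 → ℝ) (μ : Fin 2) : ℝ :=
  ∑ α, g₀⁻¹ μ α * pd α φ p

/-- `ρ = 1 + ε g₀^{μν} φ_{,μ} φ_{,ν}`. -/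
noncomputable def rho (g₀ : Matrix (Fin 2) (Fin 2) ℝ) (ε : ℝ) (φ : (Fin 2 → ℝ) → ℝ)
    (p : Fin 2 → ℝ) : ℝ :=
  1 + ε * ∑ μ, ∑ ν, g₀⁻¹ μ ν * pd μ φ p * pd ν φ p

/-- Induced metric `h_{μν} = g₀_{μν} + ε φ_{,μ} φ_{,ν}` of the graph surface. -/
noncomputable def hLow (g₀ : Matrix (Fin 2) (Fin 2) ℝ) (ε : ℝ) (φ : (Fin 2 → ℝ) → ℝ)
    (p : Fin 2 → ℝ) : Matrix (Fin 2) (Fin 2) ℝ :=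
  fun μ ν => g₀ μ ν + ε * pd μ φ p * pd ν φ p

/-- `h^{μν} = g₀^{μν} - (ε/ρ) φ^μ φ^ν`. -/
noncomputable def hUp (g₀ : Matrix (Fin 2) (Fin 2) ℝ) (ε : ℝ) (φ : (Fin 2 → ℝ) → ℝ)
    (p : Fin 2 → ℝ) : Matrix (Fin 2) (Fin 2) ℝ :=
  fun μ ν => g₀⁻¹ μ ν - (ε / rho g₀ ε φ p) * phiUp g₀ φ p μ * phiUp g₀ φ p ν

/-- `λ₀ = (1/2)[φ^{αβ} φ_{,αβ} - (φ^α_{,α})²]`. -/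
noncomputable def lam0 (g₀ : Matrix (Fin 2) (Fin 2) ℝ) (φ : (Fin 2 → ℝ) → ℝ)
    (p : Fin 2 → ℝ) : ℝ :=
  (1/2) * ((∑ α, ∑ β, (∑ μ, ∑ ν, g₀⁻¹ α μ * g₀⁻¹ β ν * pd2 μ ν φ p) * pd2 α β φ p)
    - (∑ α, ∑ β, g₀⁻¹ α β * pd2 α β φ p)^2)

/-- Conformal metric `g_{αβ} = ρ^{-1/2} h_{αβ}`. -/
noncomputable def gLow (g₀ : Matrix (Fin 2) (Fin 2) ℝ) (ε : ℝ) (φ : (Fin 2 → ℝ) → ℝ)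
    (p : Fin 2 → ℝ) : Matrix (Fin 2) (Fin 2) ℝ :=
  fun α β => (Real.sqrt (rho g₀ ε φ p))⁻¹ * (g₀ α β + ε * pd α φ p * pd β φ p)

/-- Inverse conformal metric `g^{αβ} = ρ^{1/2} (g₀^{αβ} - (ε/ρ) φ^α φ^β)`. -/
noncomputable def gUp (g₀ : Matrix (Fin 2) (Fin 2) ℝ) (ε : ℝ) (φ : (Fin 2 → ℝ) → ℝ)
    (p : Fin 2 → ℝ) : Matrix (Fin 2) (Fin 2) ℝ :=
  fun α β => Real.sqrt (rho g₀ ε φ p) *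
    (g₀⁻¹ α β - (ε / rho g₀ ε φ p) * phiUp g₀ φ p α * phiUp g₀ φ p β)

/-- The minimality condition `h^{αβ} φ_{,αβ} = 0` at a point. -/
noncomputable def minimalAt (g₀ : Matrix (Fin 2) (Fin 2) ℝ) (ε : ℝ) (φ : (Fin 2 → ℝ) → ℝ)
    (p : Fin 2 → ℝ) : Prop :=
  ∑ α, ∑ β, hUp g₀ ε φ p α β * pd2 α β φ p = 0

lemma contDiff_pd {φ : (Fin 2 → ℝ) → ℝ} (hφ : ContDiff ℝ (⊤ : ℕ∞) φ) (i : Fin 2) :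
    ContDiff ℝ (⊤ : ℕ∞) (pd i φ) := by
  exact (hφ.fderiv_right (by simp)).clm_apply contDiff_const

lemma pd_mul {f g : (Fin 2 → ℝ) → ℝ} {p} (i : Fin 2)
    (hf : DifferentiableAt ℝ f p) (hg : DifferentiableAt ℝ g p) :
    pd i (fun q => f q * g q) p = pd i f p * g p + f p * pd i g p := by
  unfold pd
  rw [fderiv_fun_mul hf hg]
  simp
  ring

lemma pd_sum {n : ℕ} {f : Fin n → (Fin 2 → ℝ) → ℝ} {p} (i : Fin 2)
    (hf : ∀ j, DifferentiableAt ℝ (f j) p) :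
    pd i (fun q => ∑ j, f j q) p = ∑ j, pd i (f j) p := by
  unfold pd
  rw [fderiv_fun_sum (fun j _ => hf j)]
  simp

lemma pd_const_add {f : (Fin 2 → ℝ) → ℝ} {p} (i : Fin 2) (c : ℝ) :
    pd i (fun q => c + f q) p = pd i f p := by
  unfold pd
  rw [fderiv_const_add]

lemma pd_const_mul {f : (Fin 2 → ℝ) → ℝ} {p} (i : Fin 2) (c : ℝ)
    (hf : DifferentiableAt ℝ f p) :
    pd i (fun q => c * f q) p = c * pd i f p := by
  unfold pd
  rw [fderiv_const_mul hf]
  simp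

lemma pd_sqrt {f : (Fin 2 → ℝ) → ℝ} {p} (i : Fin 2)
    (hf : DifferentiableAt ℝ f p) (h0 : 0 < f p) :
    pd i (fun q => Real.sqrt (f q)) p = pd i f p / (2 * Real.sqrt (f p)) := by
  have h := (Real.hasDerivAt_sqrt h0.ne').comp_hasFDerivAt p hf.hasFDerivAt
  have h' : HasFDerivAt (fun q => Real.sqrt (f q)) ((1 / (2 * Real.sqrt (f p))) • fderiv ℝ f p) p := h
  rw [pd, h'.fderiv]
  simp [pd]
  ring

lemma pd_inv {f : (Fin 2 → ℝ) → ℝ} {p} (i : Fin 2)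
    (hf : DifferentiableAt ℝ f p) (h0 : f p ≠ 0) :
    pd i (fun q => (f q)⁻¹) p = -pd i f p / (f p)^2 := by
  have h := (hasDerivAt_inv h0).comp_hasFDerivAt p hf.hasFDerivAt
  have h' : HasFDerivAt (fun q => (f q)⁻¹) ((-(f p ^ 2)⁻¹) • fderiv ℝ f p) p := h
  rw [pd, h'.fderiv]
  simp [pd]
  ring

section
variable {g₀ : Matrix (Fin 2) (Fin 2) ℝ} {ε : ℝ} {φ : (Fin 2 → ℝ) → ℝ}

lemma diff_pd (hφ : ContDiff ℝ (⊤ : ℕ∞) φ) (i : Fin 2) : Differentiable ℝ (pd i φ) :=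
  (contDiff_pd hφ i).differentiable (by simp)

lemma diff_phiUp (hφ : ContDiff ℝ (⊤ : ℕ∞) φ) (μ : Fin 2) :
    Differentiable ℝ (fun q => phiUp g₀ φ q μ) := by
  unfold phiUp
  exact Differentiable.fun_sum fun α _ => (diff_pd hφ α).const_mul _

lemma diff_rho (hφ : ContDiff ℝ (⊤ : ℕ∞) φ) : Differentiable ℝ (rho g₀ ε φ) := by
  unfold rho
  refine (Differentiable.fun_sum fun μ _ => Differentiable.fun_sum fun ν _ => ?_).const_mul _ |>.const_add _
  exact ((diff_pd hφ μ).const_mul _).mul (diff_pd hφ ν)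

lemma pd_phiUp (hφ : ContDiff ℝ (⊤ : ℕ∞) φ) (i μ : Fin 2) (p : Fin 2 → ℝ) :
    pd i (fun q => phiUp g₀ φ q μ) p = ∑ α, g₀⁻¹ μ α * pd2 i α φ p := by
  unfold phiUp
  rw [pd_sum i (fun α => ((diff_pd hφ α).const_mul _) p)]
  exact Finset.sum_congr rfl fun α _ => pd_const_mul i _ ((diff_pd hφ α) p)

lemma pd_rho (hφ : ContDiff ℝ (⊤ : ℕ∞) φ) (i : Fin 2) (p : Fin 2 → ℝ) :
    pd i (rho g₀ ε φ) p =
      ε * ∑ μ, ∑ ν, g₀⁻¹ μ ν * (pd2 i μ φ p * pd ν φ p + pd μ φ p * pd2 i ν φ p) := by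
  unfold rho
  rw [pd_const_add, pd_const_mul i ε
    (Differentiable.fun_sum (fun μ _ => Differentiable.fun_sum fun ν _ =>
      ((diff_pd hφ μ).const_mul (g₀⁻¹ μ ν)).fun_mul (diff_pd hφ ν)) p)]
  congr 1
  rw [pd_sum i (fun μ => (Differentiable.fun_sum fun ν _ =>
      ((diff_pd hφ μ).const_mul (g₀⁻¹ μ ν)).fun_mul (diff_pd hφ ν)) p)]
  refine Finset.sum_congr rfl fun μ _ => ?_
  rw [pd_sum i (fun ν => (((diff_pd hφ μ).const_mul (g₀⁻¹ μ ν)).fun_mul (diff_pd hφ ν)) p)]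
  refine Finset.sum_congr rfl fun ν _ => ?_
  rw [pd_mul i ((diff_pd hφ μ).const_mul (g₀⁻¹ μ ν) |>.differentiableAt) ((diff_pd hφ ν) p),
    pd_const_mul i _ ((diff_pd hφ μ) p)]
  simp only [pd2]
  ring

end

section
variable {g₀ : Matrix (Fin 2) (Fin 2) ℝ} {ε : ℝ} {φ : (Fin 2 → ℝ) → ℝ}

lemma fun_eq (hε : ε ≠ 0) (q : Fin 2 → ℝ) (hq : 0 < rho g₀ ε φ q) (α : Fin 2) :
    Real.sqrt (rho g₀ ε φ q) * ∑ β, hUp g₀ ε φ q α β * pd β φ q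
      = phiUp g₀ φ q α * (Real.sqrt (rho g₀ ε φ q))⁻¹ := by
  set s := Real.sqrt (rho g₀ ε φ q) with hsdef
  have hs : 0 < s := Real.sqrt_pos.2 hq
  have hr : rho g₀ ε φ q = s ^ 2 := (Real.sq_sqrt hq.le).symm
  have hr2 : s ^ 2 = 1 + ε * (g₀⁻¹ 0 0 * pd 0 φ q * pd 0 φ q + g₀⁻¹ 0 1 * pd 0 φ q * pd 1 φ q
      + g₀⁻¹ 1 0 * pd 1 φ q * pd 0 φ q + g₀⁻¹ 1 1 * pd 1 φ q * pd 1 φ q) := by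
    rw [← hr]; simp only [rho, Fin.sum_univ_two]; ring
  simp only [hUp, phiUp, Fin.sum_univ_two, hr]
  set A0 := g₀⁻¹ α 0; set A1 := g₀⁻¹ α 1
  set B00 := g₀⁻¹ 0 0; set B01 := g₀⁻¹ 0 1; set B10 := g₀⁻¹ 1 0; set B11 := g₀⁻¹ 1 1
  set a0 := pd 0 φ q; set a1 := pd 1 φ q
  field_simp
  linear_combination (A0*a0+A1*a1) * hr2

end


theorem stmt9 (g₀ : Matrix (Fin 2) (Fin 2) ℝ) (hsym : g₀.IsSymm) (hdet : g₀.det ≠ 0)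
    (ε : ℝ) (hε : ε = 1 ∨ ε = -1) (φ : (Fin 2 → ℝ) → ℝ) (hφ : ContDiff ℝ (⊤ : ℕ∞) φ)
    (hρ : ∀ p, 0 < rho g₀ ε φ p) (hmin : ∀ p, minimalAt g₀ ε φ p) :
    ∀ p : Fin 2 → ℝ,
      ∑ α, pd α (fun q => Real.sqrt (rho g₀ ε φ q) * ∑ β, hUp g₀ ε φ q α β * pd β φ q) p = 0 := by
  intro p
  have hε0 : ε ≠ 0 := by rcases hε with h | h <;> rw [h] <;> norm_num
  have hG : g₀⁻¹ 0 1 = g₀⁻¹ 1 0 := by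
    have h : (g₀⁻¹)ᵀ = g₀⁻¹ := by
      rw [Matrix.transpose_nonsing_inv, hsym.eq]
    exact congrFun (congrFun h.symm 0) 1
  have hfe : ∀ α, (fun q => Real.sqrt (rho g₀ ε φ q) * ∑ β, hUp g₀ ε φ q α β * pd β φ q)
      = fun q => phiUp g₀ φ q α * (Real.sqrt (rho g₀ ε φ q))⁻¹ :=
    fun α => funext fun q => fun_eq hε0 q (hρ q) α
  simp only [hfe]
  -- differentiability
  have drho : DifferentiableAt ℝ (rho g₀ ε φ) p := (diff_rho hφ) p
  have dsq : DifferentiableAt ℝ (fun q => Real.sqrt (rho g₀ ε φ q)) p :=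
    drho.sqrt (hρ p).ne'
  set s := Real.sqrt (rho g₀ ε φ p) with hsdef
  have hs : 0 < s := Real.sqrt_pos.2 (hρ p)
  have hr : rho g₀ ε φ p = s ^ 2 := (Real.sq_sqrt (hρ p).le).symm
  have dinv : DifferentiableAt ℝ (fun q => (Real.sqrt (rho g₀ ε φ q))⁻¹) p :=
    dsq.inv hs.ne'
  -- derivative computations
  have hpdinv : ∀ α, pd α (fun q => (Real.sqrt (rho g₀ ε φ q))⁻¹) p
      = -(pd α (rho g₀ ε φ) p / (2 * s)) / s ^ 2 := by
    intro α
    rw [pd_inv α dsq hs.ne', pd_sqrt α drho (hρ p)]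
  have hpdmul : ∀ α, pd α (fun q => phiUp g₀ φ q α * (Real.sqrt (rho g₀ ε φ q))⁻¹) p
      = (∑ μ, g₀⁻¹ α μ * pd2 α μ φ p) * s⁻¹
        + phiUp g₀ φ p α * (-(pd α (rho g₀ ε φ) p / (2 * s)) / s ^ 2) := by
    intro α
    rw [pd_mul α ((diff_phiUp hφ α) p) dinv, pd_phiUp hφ, hpdinv]
  rw [Fin.sum_univ_two, hpdmul 0, hpdmul 1]
  simp only [pd_rho hφ, phiUp, Fin.sum_univ_two]
  -- the minimality condition at p
  have hm := hmin p
  rw [minimalAt] at hm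
  simp only [hUp, phiUp, Fin.sum_univ_two, hr] at hm
  set A00 := g₀⁻¹ 0 0; set A01 := g₀⁻¹ 0 1; set A10 := g₀⁻¹ 1 0; set A11 := g₀⁻¹ 1 1
  set a0 := pd 0 φ p; set a1 := pd 1 φ p
  set b00 := pd2 0 0 φ p; set b01 := pd2 0 1 φ p; set b10 := pd2 1 0 φ p; set b11 := pd2 1 1 φ p
  rw [hG] at *
  field_simp
  field_simp at hm
  linear_combination 2 * hm
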